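/- Let E = F ⊕ G be a Banach space direct sum of closed subspaces F and G. If both F and G have the SHAI property, then E has the SHAI property. -/

import Mathlib

/-!
Let `P` and `Q = 1 - P` be the projections of `E` onto `F` and `G`. Since `ψ P + ψ Q = 1 ≠ 0`,
one of them, say `p = ψ P`, is nonzero. Compressing `ψ` by `P` on the left and by `p` on the right
gives a surjective homomorphism `B(F) → B(range p)`, which is injective because `F` has the SHAI
property; hence `P T P = 0` for every `T ∈ ker ψ`. As `ker ψ` is an ideal, `P A T B P = 0` for all
operators `A`, `B`, and since `B(E)` is a prime ring (Hahn–Banach supplies enough rank-one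
operators) and `P ≠ 0`, this forces `T = 0`.
-/

universe u

/-- A normed space `X` has the SHAI property if for every nonzero complex Banach space `Y`,
every surjective algebra homomorphism `B(X) → B(Y)` is injective. -/
def HasSHAI (X : Type*) [NormedAddCommGroup X] [NormedSpace ℂ X] : Prop :=
  ∀ (Y : Type u) [NormedAddCommGroup Y] [NormedSpace ℂ Y] [CompleteSpace Y],
    Nontrivial Y →
      ∀ ψ : (X →L[ℂ] X) →ₐ[ℂ] (Y →L[ℂ] Y),
        Function.Surjective ψ → Function.Injective ψ

open Function

namespace ContinuousLinearMap

variable {R V : Type*} [Field R] [TopologicalSpace R] [IsTopologicalRing R]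
  [AddCommGroup V] [TopologicalSpace V] [Module R V] [ContinuousSMul R V] [SeparatingDual R V]

theorem exists_mul_mul_ne_zero {S T : V →L[R] V} (hS : S ≠ 0) (hT : T ≠ 0) :
    ∃ A : V →L[R] V, S * A * T ≠ 0 := by
  obtain ⟨x, hx⟩ := DFunLike.ne_iff.mp hT
  obtain ⟨z, hz⟩ := DFunLike.ne_iff.mp hS
  obtain ⟨f, hf⟩ := SeparatingDual.exists_eq_one (R := R) hx
  exact ⟨f.smulRight z, DFunLike.ne_iff.mpr ⟨x, by simpa [hf] using hz⟩⟩

theorem eq_zero_of_forall_mul_mul_mul_eq_zero {P T : V →L[R] V} (hP : P ≠ 0)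
    (h : ∀ A B : V →L[R] V, P * (A * T * B) * P = 0) : T = 0 := by
  by_contra hT
  obtain ⟨A, hA⟩ := exists_mul_mul_ne_zero hP hT
  obtain ⟨B, hB⟩ := exists_mul_mul_ne_zero hA hP
  exact hB (by simpa only [mul_assoc] using h A B)

end ContinuousLinearMap

namespace AlgHom

variable {𝕜 W E Y Z : Type*} [NontriviallyNormedField 𝕜]
  [NormedAddCommGroup W] [NormedSpace 𝕜 W] [NormedAddCommGroup E] [NormedSpace 𝕜 E]
  [NormedAddCommGroup Y] [NormedSpace 𝕜 Y] [NormedAddCommGroup Z] [NormedSpace 𝕜 Z]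
  (ψ : (E →L[𝕜] E) →ₐ[𝕜] (Y →L[𝕜] Y)) {ι : W →L[𝕜] E} {ρ : E →L[𝕜] W}
  {j : Z →L[𝕜] Y} {r : Y →L[𝕜] Z}

def compression (hρι : LeftInverse ρ ι) (hrj : LeftInverse r j) (hjr : j ∘L r = ψ (ι ∘L ρ)) :
    (W →L[𝕜] W) →ₐ[𝕜] (Z →L[𝕜] Z) :=
  .ofLinearMap
    { toFun S := r ∘L ψ (ι ∘L S ∘L ρ) ∘L j
      map_add' S₁ S₂ := by
        simp only [ContinuousLinearMap.add_comp, ContinuousLinearMap.comp_add, map_add]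
      map_smul' c S := by
        simp only [ContinuousLinearMap.smul_comp, ContinuousLinearMap.comp_smul, map_smul,
          RingHom.id_apply] }
    (by
      have : ι ∘L (1 : W →L[𝕜] W) ∘L ρ = ι ∘L ρ := rfl
      ext z
      simp [this, ← hjr, hrj z])
    (fun S₁ S₂ => by
      have : ι ∘L (S₁ * S₂) ∘L ρ = (ι ∘L S₁ ∘L ρ) * (ι ∘L ρ) * (ι ∘L S₂ ∘L ρ) := by
        ext x; simp [hρι _]
      ext z
      simp [this, ← hjr])

theorem compression_apply (hρι : LeftInverse ρ ι) (hrj : LeftInverse r j)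
    (hjr : j ∘L r = ψ (ι ∘L ρ)) (S : W →L[𝕜] W) :
    ψ.compression hρι hrj hjr S = r ∘L ψ (ι ∘L S ∘L ρ) ∘L j :=
  rfl

theorem compression_corner (hρι : LeftInverse ρ ι) (hrj : LeftInverse r j)
    (hjr : j ∘L r = ψ (ι ∘L ρ)) (T : E →L[𝕜] E) :
    ψ.compression hρι hrj hjr (ρ ∘L T ∘L ι) = r ∘L ψ T ∘L j := by
  have : ι ∘L (ρ ∘L T ∘L ι) ∘L ρ = (ι ∘L ρ) * T * (ι ∘L ρ) := rfl
  ext z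
  simp [compression_apply, this, ← hjr, hrj _]

theorem compression_surjective (hρι : LeftInverse ρ ι) (hrj : LeftInverse r j)
    (hjr : j ∘L r = ψ (ι ∘L ρ)) (hψ : Surjective ψ) :
    Surjective (ψ.compression hρι hrj hjr) := by
  intro B
  obtain ⟨T, hT⟩ := hψ (j ∘L B ∘L r)
  refine ⟨ρ ∘L T ∘L ι, ?_⟩
  ext z
  simp [compression_corner, hT, hrj _]

end AlgHom

theorem HasSHAI.injective_of_map_ne_zero {W E : Type*} [NormedAddCommGroup W] [NormedSpace ℂ W]
    [NormedAddCommGroup E] [NormedSpace ℂ E] (hW : HasSHAI.{u} W)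
    {ι : W →L[ℂ] E} {ρ : E →L[ℂ] W} (hρι : LeftInverse ρ ι)
    {Y : Type u} [NormedAddCommGroup Y] [NormedSpace ℂ Y] [CompleteSpace Y]
    (ψ : (E →L[ℂ] E) →ₐ[ℂ] (Y →L[ℂ] Y)) (hψ : Surjective ψ) (hP : ψ (ι ∘L ρ) ≠ 0) :
    Injective ψ := by
  have hp : IsIdempotentElem (ψ (ι ∘L ρ)) :=
    IsIdempotentElem.map (ContinuousLinearMap.ext fun x => by simp [hρι _]) ψ
  generalize hp_def : ψ (ι ∘L ρ) = p at hP hp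
  have : CompleteSpace (LinearMap.range (p : Y →ₗ[ℂ] Y)) :=
    (ContinuousLinearMap.IsIdempotentElem.isClosed_range hp).completeSpace_coe
  have hrange : Nontrivial (LinearMap.range (p : Y →ₗ[ℂ] Y)) := by
    obtain ⟨y, hy⟩ := DFunLike.ne_iff.mp hP
    exact nontrivial_of_ne ⟨p y, y, rfl⟩ 0 fun h => hy congr($h.1)
  have hrj : LeftInverse p.rangeRestrict (LinearMap.range (p : Y →ₗ[ℂ] Y)).subtypeL := by
    rintro ⟨_, y, rfl⟩
    exact Subtype.ext congr($hp y)
  have hjr : (LinearMap.range (p : Y →ₗ[ℂ] Y)).subtypeL ∘L p.rangeRestrict = ψ (ι ∘L ρ) :=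
    hp_def.symm
  have hΦ : Injective (ψ.compression hρι hrj hjr) :=
    hW _ hrange _ (ψ.compression_surjective hρι hrj hjr hψ)
  have corner : ∀ T, ψ T = 0 → (ι ∘L ρ) * T * (ι ∘L ρ) = 0 := by
    intro T hT
    have : ρ ∘L T ∘L ι = 0 := hΦ <| by
      rw [ψ.compression_corner, hT, map_zero, ContinuousLinearMap.zero_comp,
        ContinuousLinearMap.comp_zero]
    calc (ι ∘L ρ) * T * (ι ∘L ρ) = ι ∘L (ρ ∘L T ∘L ι) ∘L ρ := rfl
      _ = 0 := by rw [this, ContinuousLinearMap.zero_comp, ContinuousLinearMap.comp_zero]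
  refine (injective_iff_map_eq_zero ψ).mpr fun T hT => ?_
  refine ContinuousLinearMap.eq_zero_of_forall_mul_mul_mul_eq_zero
    (fun h => hP (by rw [← hp_def, h, map_zero])) fun A B => corner _ ?_
  simp [hT]

/-- If `E = F ⊕ G` is a Banach space direct sum of closed subspaces `F` and
`G`, and both `F` and `G` have the SHAI property, then so does `E`. -/
theorem shai_of_direct_sum
    {E : Type*} [NormedAddCommGroup E] [NormedSpace ℂ E] [CompleteSpace E]
    (F G : Submodule ℂ E)
    (hFc : IsClosed (F : Set E)) (hGc : IsClosed (G : Set E))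
    (hcompl : IsCompl F G)
    (hF : HasSHAI.{u} F) (hG : HasSHAI.{u} G) :
    HasSHAI.{u} E := by
  intro Y _ _ _ _ ψ hψ
  have h : F.IsTopCompl G := Submodule.IsCompl.isTopCompl_of_isClosed hcompl hFc hGc
  have hsum : ψ (F.projectionL G h) + ψ (G.projectionL F h.symm) = 1 := by
    rw [← map_add, Submodule.projectionL_add_projectionL_eq_id]
    exact map_one ψ
  by_cases hP : ψ (F.projectionL G h) = 0
  · refine hG.injective_of_map_ne_zero (ι := G.subtypeL)
      (Submodule.projectionOntoL_apply_left h.symm) ψ hψ ?_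
    change ψ (G.projectionL F h.symm) ≠ 0
    rw [hP, zero_add] at hsum
    exact hsum ▸ one_ne_zero
  · exact hF.injective_of_map_ne_zero (ι := F.subtypeL)
      (Submodule.projectionOntoL_apply_left h) ψ hψ hP
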